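/- Let a, b ∈ [0, 1/2]. Then the function x ↦ h_D(a + x, b + x) is monotone decreasing on the interval [0, 1/2 − max(a,b)]. -/

import Mathlib

noncomputable def hb (x : ℝ) : ℝ := -(x * Real.log x) - (1 - x) * Real.log (1 - x)

noncomputable def hD (x₁ x₂ : ℝ) : ℝ := 2 * hb ((x₁ + x₂) / 2) - hb x₁ - hb x₂

lemma hb_continuous : Continuous hb := by
  unfold hb
  exact (Real.continuous_mul_log.neg).sub
    (Real.continuous_mul_log.comp (continuous_const.sub continuous_id))

lemma hb_hasDerivAt {y : ℝ} (h0 : 0 < y) (h1 : y < 1) :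
    HasDerivAt hb (Real.log (1 - y) - Real.log y) y := by
  have A := Real.hasDerivAt_mul_log (ne_of_gt h0)
  have hy1 : (1:ℝ) - y ≠ 0 := by linarith
  have B : HasDerivAt (fun z : ℝ => (1 - z) * Real.log (1 - z))
      ((Real.log (1 - y) + 1) * (-1)) y :=
    (Real.hasDerivAt_mul_log hy1).comp y ((hasDerivAt_id y).const_sub 1)
  have C := A.neg.sub B
  exact C.congr_deriv (by ring)

lemma key_ineq {x₁ x₂ : ℝ} (h10 : 0 < x₁) (h11 : x₁ ≤ 1/2)
    (h20 : 0 < x₂) (h21 : x₂ ≤ 1/2) :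
    2 * (Real.log (1 - (x₁ + x₂) / 2) - Real.log ((x₁ + x₂) / 2)) ≤
      (Real.log (1 - x₁) - Real.log x₁) + (Real.log (1 - x₂) - Real.log x₂) := by
  set m : ℝ := (x₁ + x₂) / 2 with hm
  have hm0 : 0 < m := by simp [hm]; linarith
  have hm1 : m ≤ 1/2 := by simp [hm]; linarith
  have h1m : 0 < 1 - m := by linarith
  have h1x₁ : 0 < 1 - x₁ := by linarith
  have h1x₂ : 0 < 1 - x₂ := by linarith
  have hmain : (1 - m)^2 * (x₁ * x₂) ≤ m^2 * ((1 - x₁) * (1 - x₂)) := by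
    have h : (0:ℝ) ≤ (1 - x₁ - x₂) * (x₁ - x₂)^2 :=
      mul_nonneg (by linarith) (sq_nonneg _)
    rw [hm]
    nlinarith [h]
  have hlog := Real.log_le_log (by positivity) hmain
  rw [Real.log_mul (by positivity) (by positivity),
      Real.log_mul (by positivity) (by positivity),
      Real.log_mul (by positivity) (by positivity),
      Real.log_mul (by positivity) (by positivity),
      Real.log_pow, Real.log_pow] at hlog
  push_cast at hlog
  linarith

theorem hD_shift_antitoneOn (a b : ℝ) (ha : a ∈ Set.Icc (0:ℝ) (1/2))
    (hb' : b ∈ Set.Icc (0:ℝ) (1/2)) :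
    AntitoneOn (fun x => hD (a + x) (b + x)) (Set.Icc 0 (1/2 - max a b)) := by
  obtain ⟨ha0, ha1⟩ := ha
  obtain ⟨hb0, hb1⟩ := hb'
  have hcont : ContinuousOn (fun x => hD (a + x) (b + x)) (Set.Icc 0 (1/2 - max a b)) := by
    have cm : Continuous fun x : ℝ => ((a + x) + (b + x)) / 2 := by continuity
    have c1 : Continuous fun x : ℝ => a + x := by continuity
    have c2 : Continuous fun x : ℝ => b + x := by continuity
    exact (((continuous_const.mul (hb_continuous.comp cm)).sub
      (hb_continuous.comp c1)).sub (hb_continuous.comp c2)).continuousOn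
  have hderiv : ∀ x ∈ interior (Set.Icc (0:ℝ) (1/2 - max a b)),
      HasDerivAt (fun x => hD (a + x) (b + x))
        (2 * (Real.log (1 - ((a + x) + (b + x)) / 2) - Real.log (((a + x) + (b + x)) / 2))
          - (Real.log (1 - (a + x)) - Real.log (a + x))
          - (Real.log (1 - (b + x)) - Real.log (b + x))) x := by
    intro x hx
    rw [interior_Icc] at hx
    obtain ⟨hx0, hx1⟩ := hx
    have hax : 0 < a + x := by linarith
    have hbx : 0 < b + x := by linarith
    have hax1 : a + x < 1 := by
      have := le_max_left a b; linarith
    have hbx1 : b + x < 1 := by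
      have := le_max_right a b; linarith
    have hm0 : 0 < ((a + x) + (b + x)) / 2 := by linarith
    have hm1 : ((a + x) + (b + x)) / 2 < 1 := by linarith
    have Hm : HasDerivAt (fun x : ℝ => ((a + x) + (b + x)) / 2) 1 x := by
      have := (((hasDerivAt_id x).const_add a).add ((hasDerivAt_id x).const_add b)).div_const 2
      simpa using this
    have H1 : HasDerivAt (fun x : ℝ => a + x) 1 x := (hasDerivAt_id x).const_add a
    have H2 : HasDerivAt (fun x : ℝ => b + x) 1 x := (hasDerivAt_id x).const_add b
    have Gm := ((hb_hasDerivAt hm0 hm1).comp x Hm).const_mul 2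
    have G1 := (hb_hasDerivAt hax hax1).comp x H1
    have G2 := (hb_hasDerivAt hbx hbx1).comp x H2
    have G := (Gm.sub G1).sub G2
    unfold hD
    exact G.congr_deriv (by ring)
  apply antitoneOn_of_deriv_nonpos (convex_Icc _ _) hcont
  · intro x hx
    exact (hderiv x hx).differentiableAt.differentiableWithinAt
  · intro x hx
    rw [(hderiv x hx).deriv]
    rw [interior_Icc] at hx
    obtain ⟨hx0, hx1⟩ := hx
    have h1 : a + x ≤ 1/2 := by have := le_max_left a b; linarith
    have h2 : b + x ≤ 1/2 := by have := le_max_right a b; linarith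
    have := key_ineq (x₁ := a + x) (x₂ := b + x) (by linarith) h1 (by linarith) h2
    linarith
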